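/- arXiv:2012.06445 — 4 statements merged into one kernel-verified Lean document; each statement's English description precedes it below -/
import Mathlib

section
/- Let ℓ be a prime with ℓ ≠ 3. Then ℓ does not divide the resultant R_ℓ = Res(X^{2ℓ} − 1, (X−1)^{2ℓ} − 1) of the polynomials X^{2ℓ} − 1 and (X−1)^{2ℓ} − 1 in ℤ[X]. In particular R_ℓ ≠ 0. -/
/-! Modulo ℓ we have X^{2ℓ} − 1 = (X − 1)^ℓ (X + 1)^ℓ, so multiplicativity of the resultant
gives R_ℓ ≡ (q(1) q(−1))^ℓ with q = (X − 1)^{2ℓ} − 1. Since q(1) = −1 and q(−1) = 4^ℓ − 1 = 3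
in 𝔽_ℓ, R_ℓ ≡ (−3)^ℓ ≢ 0 mod ℓ. The Sylvester matrix used here is Mathlib's `sylvester q p`
transposed, with rows reversed and columns reversed within each block, so the two resultants
agree up to sign. -/

open Polynomial

/-- The Sylvester matrix of two integer polynomials `p`, `q` (with respect to their
natural degrees `m = deg p`, `n = deg q`): the first `n` rows carry the coefficients
of `p` in decreasing order, the remaining `m` rows those of `q`. -/
def sylvesterMatrix (p q : Polynomial ℤ) :
    Matrix (Fin (q.natDegree + p.natDegree)) (Fin (q.natDegree + p.natDegree)) ℤ :=
  Matrix.of fun i j =>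
    if (i : ℕ) < q.natDegree then
      (if (i : ℕ) ≤ (j : ℕ) ∧ (j : ℕ) ≤ (i : ℕ) + p.natDegree then
        p.coeff (p.natDegree + i - j) else 0)
    else
      (if (i : ℕ) - q.natDegree ≤ (j : ℕ) ∧ (j : ℕ) ≤ ((i : ℕ) - q.natDegree) + q.natDegree then
        q.coeff (q.natDegree + ((i : ℕ) - q.natDegree) - j) else 0)

/-- The resultant of two integer polynomials, as the determinant of their Sylvester matrix. -/
def intResultant (p q : Polynomial ℤ) : ℤ := (sylvesterMatrix p q).det

open Matrix

def finAddRevPerm (n m : ℕ) : Equiv.Perm (Fin (n + m)) :=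
  finSumFinEquiv.symm.trans ((Equiv.sumCongr Fin.revPerm Fin.revPerm).trans finSumFinEquiv)

theorem sylvesterMatrix_eq_submatrix (p q : ℤ[X]) :
    sylvesterMatrix p q = (sylvester q p q.natDegree p.natDegree)ᵀ.submatrix
      (finAddRevPerm q.natDegree p.natDegree) Fin.revPerm := by
  ext i j
  have := j.isLt
  induction i using Fin.addCases with
  | left i | right i =>
    have := i.isLt
    simp only [sylvesterMatrix, sylvester, finAddRevPerm, of_apply, transpose_apply,
      submatrix_apply, Equiv.trans_apply, Equiv.sumCongr_apply, finSumFinEquiv_symm_apply_castAdd,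
      finSumFinEquiv_symm_apply_natAdd, Sum.map_inl, Sum.map_inr, finSumFinEquiv_apply_left,
      finSumFinEquiv_apply_right, Fin.addCases_left, Fin.addCases_right, Fin.revPerm_apply,
      Fin.val_rev, Fin.val_castAdd, Fin.val_natAdd, Set.mem_Icc]
    split_ifs <;> first | rfl | omega | (congr 1; omega)

theorem abs_intResultant (p q : ℤ[X]) : |intResultant p q| = |resultant p q| := by
  rw [intResultant, sylvesterMatrix_eq_submatrix, abs_det_submatrix_equiv_equiv, det_transpose,
    ← resultant, resultant_comm, abs_mul, abs_pow, abs_neg, abs_one, one_pow, one_mul]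

theorem X_pow_two_mul_sub_one_eq {R : Type*} [CommRing R] (p : ℕ) [Fact p.Prime] [CharP R p] :
    (X ^ (2 * p) - 1 : R[X]) = (X - C 1) ^ p * (X - C (-1)) ^ p := by
  rw [← mul_pow, show (X - C 1) * (X - C (-1)) = (X ^ 2 - 1 : R[X]) by simp; ring,
    sub_pow_char, ← pow_mul, one_pow]

theorem resultant_X_pow_two_mul_sub_one {R : Type*} [CommRing R] (p : ℕ) [Fact p.Prime]
    [CharP R p] (g : R[X]) (n : ℕ) (hg : g.natDegree ≤ n) :
    resultant (X ^ (2 * p) - 1) g (2 * p) n = (g.eval 1 * g.eval (-1)) ^ p := by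
  have : Nontrivial R := CharP.nontrivial_of_char_ne_one (Fact.out : p.Prime).ne_one
  have h := resultant_mul_left ((X - C 1) ^ p) ((X - C (-1)) ^ p) g n hg
  simp only [(monic_X_sub_C _).natDegree_pow, natDegree_X_sub_C, mul_one,
    resultant_X_sub_C_pow_left _ _ _ _ hg] at h
  rw [X_pow_two_mul_sub_one_eq, two_mul, h, mul_pow]

theorem natDegree_X_sub_one_pow_sub_one {R : Type*} [CommRing R] [Nontrivial R] (n : ℕ) :
    ((X - 1 : R[X]) ^ n - 1).natDegree = n := by
  rw [← C_1, natDegree_sub_C, (monic_X_sub_C 1).natDegree_pow, natDegree_X_sub_C, mul_one]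

theorem cast_resultant_eq_neg_three_pow (ℓ : ℕ) [Fact ℓ.Prime] :
    ((resultant (X ^ (2 * ℓ) - 1 : ℤ[X]) ((X - 1) ^ (2 * ℓ) - 1) : ℤ) : ZMod ℓ) = (-3) ^ ℓ := by
  have hp : (X ^ (2 * ℓ) - 1 : ℤ[X]).natDegree = 2 * ℓ := by
    simpa using natDegree_X_pow_sub_C (n := 2 * ℓ) (r := (1 : ℤ))
  have hmap : ∀ f : ℤ[X], (f ^ (2 * ℓ) - 1).map (Int.castRingHom (ZMod ℓ)) =
      f.map (Int.castRingHom (ZMod ℓ)) ^ (2 * ℓ) - 1 := by simp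
  rw [← eq_intCast (Int.castRingHom (ZMod ℓ)), ← resultant_map_map, hp,
    natDegree_X_sub_one_pow_sub_one, hmap, hmap, Polynomial.map_X, Polynomial.map_sub,
    Polynomial.map_X, Polynomial.map_one,
    resultant_X_pow_two_mul_sub_one ℓ _ _ (natDegree_X_sub_one_pow_sub_one _).le]
  have hℓ : ℓ ≠ 0 := (Fact.out : ℓ.Prime).ne_zero
  congr 1
  simp only [eval_sub, eval_pow, eval_X, eval_one, sub_self, pow_mul', ZMod.pow_card,
    zero_pow hℓ]
  norm_num

theorem unit_eq_stmt5 (ℓ : ℕ) (hℓ : ℓ.Prime) (h3 : ℓ ≠ 3) :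
    ¬ ((ℓ : ℤ) ∣ intResultant (X ^ (2 * ℓ) - 1) ((X - 1) ^ (2 * ℓ) - 1)) ∧
      intResultant (X ^ (2 * ℓ) - 1) ((X - 1) ^ (2 * ℓ) - 1) ≠ 0 := by
  have : Fact ℓ.Prime := ⟨hℓ⟩
  have h3ℓ : (3 : ZMod ℓ) ≠ 0 := by
    rw [Ne, ← Nat.cast_ofNat, ZMod.natCast_eq_zero_iff,
      Nat.prime_dvd_prime_iff_eq hℓ Nat.prime_three]
    exact h3
  have hndvd : ¬ (ℓ : ℤ) ∣ intResultant (X ^ (2 * ℓ) - 1) ((X - 1) ^ (2 * ℓ) - 1) := by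
    rw [← dvd_abs, abs_intResultant, dvd_abs, ← ZMod.intCast_zmod_eq_zero_iff_dvd,
      cast_resultant_eq_neg_three_pow]
    exact pow_ne_zero _ (neg_ne_zero.mpr h3ℓ)
  exact ⟨hndvd, fun h ↦ hndvd (h ▸ dvd_zero _)⟩
end

section
/- Let p ≥ 5 be prime and ζ = ζ_p a primitive p-th root of unity. Then λ = 2 + ζ + ζ^{-1} and μ = −1 − ζ − ζ^{-1} are units in ℤ[ζ], they lie in the ring of integers of ℚ(ζ_p)^+, and λ + μ = 1. Hence the maximal real subfield ℚ(ζ_p)^+ is exceptional. -/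
open NumberField IntermediateField

theorem mkUnit13 {R : Type*} [CommRing R] {A : Type*} [CommRing A] [Algebra A R]
    (S : Subalgebra A R) {a b : R} (ha : a ∈ S) (hb : b ∈ S) (h : a * b = 1) :
    ∃ u : Sˣ, ((u : S) : R) = a :=
  ⟨⟨⟨a, ha⟩, ⟨b, hb⟩, Subtype.ext h, Subtype.ext (by rw [mul_comm] at h; exact h)⟩, rfl⟩

theorem unit_eq_stmt13 (p : ℕ) (hp : p.Prime) (hp5 : 5 ≤ p)
    (K : Type*) [Field K] [NumberField K] (ζ : K) (hζ : IsPrimitiveRoot ζ p) :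
    (2 + ζ + ζ⁻¹) + (-1 - ζ - ζ⁻¹) = 1 ∧
    (∃ u : (Algebra.adjoin ℤ ({ζ} : Set K))ˣ,
      ((u : Algebra.adjoin ℤ ({ζ} : Set K)) : K) = 2 + ζ + ζ⁻¹) ∧
    (∃ v : (Algebra.adjoin ℤ ({ζ} : Set K))ˣ,
      ((v : Algebra.adjoin ℤ ({ζ} : Set K)) : K) = -1 - ζ - ζ⁻¹) ∧
    (2 + ζ + ζ⁻¹ ∈ ℚ⟮ζ + ζ⁻¹⟯ ∧ IsIntegral ℤ (2 + ζ + ζ⁻¹)) ∧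
    (-1 - ζ - ζ⁻¹ ∈ ℚ⟮ζ + ζ⁻¹⟯ ∧ IsIntegral ℤ (-1 - ζ - ζ⁻¹)) ∧
    (∃ lam mu : (𝓞 (ℚ⟮ζ + ζ⁻¹⟯ : IntermediateField ℚ K))ˣ,
      (lam : 𝓞 (ℚ⟮ζ + ζ⁻¹⟯ : IntermediateField ℚ K)) + (mu : 𝓞 (ℚ⟮ζ + ζ⁻¹⟯ : IntermediateField ℚ K)) = 1) := by
  haveI : NeZero p := ⟨hp.ne_zero⟩
  haveI : Fact p.Prime := ⟨hp⟩
  haveI : Fact (1 < p) := ⟨hp.one_lt⟩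
  have hppos : 0 < p := hp.pos
  have hζ0 : ζ ≠ 0 := hζ.ne_zero hp.ne_zero
  have hnd : ∀ n : ℕ, 0 < n → n < 5 → ¬ p ∣ n := by
    intro n hn hn5 hd
    exact absurd (Nat.le_of_dvd hn hd) (by omega)
  have hζ1 : ζ - 1 ≠ 0 := by
    refine sub_ne_zero.mpr fun h => hnd 1 one_pos (by norm_num) ?_
    exact (hζ.pow_eq_one_iff_dvd 1).mp (by simpa using h)
  -- ζ⁻¹ = ζ ^ (p - 1)
  have hinv : ζ⁻¹ = ζ ^ (p - 1) := by
    symm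
    apply eq_inv_of_mul_eq_one_left
    rw [← pow_succ]
    have h9 : p - 1 + 1 = p := by omega
    rw [h9, hζ.pow_eq_one]
  -- key: ζ ^ n = ζ when n % p = 1
  have key : ∀ n : ℕ, n % p = 1 → ζ ^ n = ζ := by
    intro n h
    conv_lhs => rw [← Nat.div_add_mod n p]
    rw [pow_add, pow_mul, hζ.pow_eq_one, one_pow, h, pow_one, one_mul]
  have hmod : ∀ a : ℕ, 0 < a → a < 5 → (a * ((a : ZMod p)⁻¹).val) % p = 1 := by
    intro a ha ha5
    have hZne : ((a : ZMod p)) ≠ 0 := fun h =>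
      hnd a ha ha5 ((ZMod.natCast_eq_zero_iff a p).mp h)
    have h1 : (((a * ((a : ZMod p)⁻¹).val : ℕ)) : ZMod p) = 1 := by
      push_cast
      rw [ZMod.natCast_zmod_val]
      exact mul_inv_cancel₀ hZne
    have h2 := congrArg ZMod.val h1
    rwa [ZMod.val_natCast, ZMod.val_one p] at h2
  set k := (((2 : ℕ) : ZMod p)⁻¹).val with hk
  set m := (((3 : ℕ) : ZMod p)⁻¹).val with hm
  have hk1 : ζ ^ (2 * k) = ζ := key _ (hmod 2 (by norm_num) (by norm_num))
  have hm1 : ζ ^ (3 * m) = ζ := key _ (hmod 3 (by norm_num) (by norm_num))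
  set S : K := ∑ i ∈ Finset.range k, (ζ ^ 2) ^ i with hS
  set U : K := ∑ i ∈ Finset.range m, (ζ ^ 3) ^ i with hU
  have hSgeom : S * (ζ ^ 2 - 1) = ζ - 1 := by
    rw [hS, geom_sum_mul, ← pow_mul, hk1]
  have hUgeom : U * (ζ ^ 3 - 1) = ζ - 1 := by
    rw [hU, geom_sum_mul, ← pow_mul, hm1]
  have hSinv : (1 + ζ) * S = 1 := by
    have h : ((1 + ζ) * S) * (ζ - 1) = 1 * (ζ - 1) := by
      have h2 : (1 + ζ) * (ζ - 1) = ζ ^ 2 - 1 := by ring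
      rw [one_mul, mul_assoc, mul_comm S (ζ - 1), ← mul_assoc, h2, mul_comm, hSgeom]
    exact mul_right_cancel₀ hζ1 h
  have hTinv : (1 + ζ + ζ ^ 2) * U = 1 := by
    have h : ((1 + ζ + ζ ^ 2) * U) * (ζ - 1) = 1 * (ζ - 1) := by
      have h2 : (1 + ζ + ζ ^ 2) * (ζ - 1) = ζ ^ 3 - 1 := by ring
      rw [one_mul, mul_assoc, mul_comm U (ζ - 1), ← mul_assoc, h2, mul_comm, hUgeom]
    exact mul_right_cancel₀ hζ1 h
  have e1 : 2 + ζ + ζ⁻¹ = ζ⁻¹ * (1 + ζ) ^ 2 := by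
    field_simp
    ring
  have e2 : -1 - ζ - ζ⁻¹ = -(ζ⁻¹ * (1 + ζ + ζ ^ 2)) := by
    field_simp
    ring
  have hlam : (2 + ζ + ζ⁻¹) * (ζ * S ^ 2) = 1 := by
    rw [e1]
    have h1 : ζ⁻¹ * (1 + ζ) ^ 2 * (ζ * S ^ 2) = (ζ⁻¹ * ζ) * ((1 + ζ) * S) ^ 2 := by ring
    rw [h1, inv_mul_cancel₀ hζ0, hSinv, one_mul, one_pow]
  have hmu : (-1 - ζ - ζ⁻¹) * (-(ζ * U)) = 1 := by
    rw [e2]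
    have h1 : -(ζ⁻¹ * (1 + ζ + ζ ^ 2)) * (-(ζ * U)) = (ζ⁻¹ * ζ) * ((1 + ζ + ζ ^ 2) * U) := by
      ring
    rw [h1, inv_mul_cancel₀ hζ0, hTinv, mul_one]
  -- memberships in the adjoin subalgebra
  set A := Algebra.adjoin ℤ ({ζ} : Set K) with hA
  have hζA : ζ ∈ A := Algebra.self_mem_adjoin_singleton ℤ ζ
  have hζiA : ζ⁻¹ ∈ A := by rw [hinv]; exact pow_mem hζA _
  have hlamA : 2 + ζ + ζ⁻¹ ∈ A :=
    add_mem (add_mem (by exact_mod_cast A.natCast_mem 2) hζA) hζiA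
  have hmuA : -1 - ζ - ζ⁻¹ ∈ A := sub_mem (sub_mem (neg_mem A.one_mem) hζA) hζiA
  have hSA : S ∈ A := Subalgebra.sum_mem A (fun i _ => pow_mem (pow_mem hζA 2) i)
  have hUA : U ∈ A := Subalgebra.sum_mem A (fun i _ => pow_mem (pow_mem hζA 3) i)
  have hlamiA : ζ * S ^ 2 ∈ A := mul_mem hζA (pow_mem hSA 2)
  have hmuiA : -(ζ * U) ∈ A := neg_mem (mul_mem hζA hUA)
  -- integrality
  have hζint : IsIntegral ℤ ζ := hζ.isIntegral hppos
  have hAint : A ≤ integralClosure ℤ K :=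
    Algebra.adjoin_le_iff.mpr (Set.singleton_subset_iff.mpr hζint)
  have hintA : ∀ x ∈ A, IsIntegral ℤ x := fun x hx => hAint hx
  -- memberships in the real subfield
  set F := (ℚ⟮ζ + ζ⁻¹⟯ : IntermediateField ℚ K) with hF
  have hgen : ζ + ζ⁻¹ ∈ F := mem_adjoin_simple_self ℚ (ζ + ζ⁻¹)
  have hlamF : 2 + ζ + ζ⁻¹ ∈ F := by
    have : (2 : K) + ζ + ζ⁻¹ = 2 + (ζ + ζ⁻¹) := by ring
    rw [this]
    exact add_mem (by exact_mod_cast F.natCast_mem 2) hgen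
  have hmuF : -1 - ζ - ζ⁻¹ ∈ F := by
    have : (-1 : K) - ζ - ζ⁻¹ = -1 - (ζ + ζ⁻¹) := by ring
    rw [this]
    exact sub_mem (neg_mem F.one_mem) hgen
  -- inverses lie in F too (F is a field)
  have hlamiF : ζ * S ^ 2 ∈ F := by
    have h0 : (2 + ζ + ζ⁻¹) ≠ 0 := by
      intro h; rw [h, zero_mul] at hlam; exact zero_ne_one hlam
    have h2 : ζ * S ^ 2 = (2 + ζ + ζ⁻¹)⁻¹ :=
      eq_inv_of_mul_eq_one_left (by rw [mul_comm]; exact hlam)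
    rw [h2]
    exact F.inv_mem hlamF
  have hmuiF : -(ζ * U) ∈ F := by
    have h0 : (-1 - ζ - ζ⁻¹) ≠ 0 := by
      intro h; rw [h, zero_mul] at hmu; exact zero_ne_one hmu
    have h2 : -(ζ * U) = (-1 - ζ - ζ⁻¹)⁻¹ :=
      eq_inv_of_mul_eq_one_left (by rw [mul_comm]; exact hmu)
    rw [h2]
    exact F.inv_mem hmuF
  -- units of 𝓞 F
  have mkOF : ∀ (a b : K), a ∈ F → b ∈ F → IsIntegral ℤ a → IsIntegral ℤ b →
      a * b = 1 → ∃ u : (𝓞 F)ˣ, (((u : 𝓞 F) : F) : K) = a := by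
    intro a b haF hbF hai hbi hab
    have hai' : IsIntegral ℤ (⟨a, haF⟩ : F) :=
      (isIntegral_algebraMap_iff (algebraMap F K).injective).mp (by exact hai)
    have hbi' : IsIntegral ℤ (⟨b, hbF⟩ : F) :=
      (isIntegral_algebraMap_iff (algebraMap F K).injective).mp (by exact hbi)
    obtain ⟨u, hu⟩ := mkUnit13 (integralClosure ℤ F) hai' hbi'
      (Subtype.ext (by exact hab))
    exact ⟨u, congrArg Subtype.val hu⟩
  refine ⟨by ring, ?_, ?_, ⟨hlamF, hintA _ hlamA⟩, ⟨hmuF, hintA _ hmuA⟩, ?_⟩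
  · exact mkUnit13 A hlamA hlamiA hlam
  · exact mkUnit13 A hmuA hmuiA hmu
  · obtain ⟨u, hu⟩ := mkOF _ _ hlamF hlamiF (hintA _ hlamA) (hintA _ hlamiA) hlam
    obtain ⟨v, hv⟩ := mkOF _ _ hmuF hmuiF (hintA _ hmuA) (hintA _ hmuiA) hmu
    refine ⟨u, v, ?_⟩
    apply Subtype.ext
    apply Subtype.ext
    show ((((u : 𝓞 F) : F) : K) + (((v : 𝓞 F) : F) : K)) = 1
    rw [hu, hv]; ring
end

section
/- Let ℓ be a prime, F a cyclic number field of degree ℓ, p a prime totally ramified in F with unique prime 𝔭 above p, and suppose λ, μ ∈ O_F^× satisfy λ + μ = 1. If b ∈ ℤ satisfies λ ≡ b (mod 𝔭), then b^{2ℓ} ≡ 1 (mod p) and (b − 1)^{2ℓ} ≡ 1 (mod p). -/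
/-!
Since 𝔭 is the only prime above p, every Galois automorphism fixes it, so all conjugates of a
unit `u ≡ c (mod 𝔭)` are `≡ c` as well and `N(u) ≡ c ^ ℓ (mod 𝔭)`, hence mod p. As `N(u) = ±1`,
squaring gives `c ^ (2ℓ) ≡ 1`. Apply this to `λ ≡ b` and to `μ = 1 - λ ≡ 1 - b`.
-/

open NumberField

theorem Ideal.intCast_mem_iff_dvd {R : Type*} [CommRing R] {P : Ideal R} (hP : P ≠ ⊤)
    {p : ℕ} (hp : p.Prime) (hpP : (p : R) ∈ P) (m : ℤ) : (m : R) ∈ P ↔ (p : ℤ) ∣ m := by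
  have : P.LiesOver (Ideal.span {(p : ℤ)}) :=
    (Ideal.liesOver_span_iff hP (Nat.prime_iff_prime_int.mp hp)).mpr (by simpa using hpP)
  rw [← Ideal.mem_span_singleton, Ideal.mem_of_liesOver P (Ideal.span {(p : ℤ)}), eq_intCast]

theorem Ideal.map_ringEquiv_eq_of_unique {R : Type*} [CommRing R] [CharZero R] {p : ℕ}
    (hp : p ≠ 0) {P : Ideal R} [P.IsPrime] (hpP : (p : R) ∈ P)
    (huniq : ∀ Q : Ideal R, Q.IsPrime → (p : R) ∈ Q → Q ≠ ⊥ → Q = P) (τ : R ≃+* R) :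
    P.map τ = P := by
  refine huniq _ (Ideal.map_isPrime_of_equiv τ) ?_ ?_
  · simpa using Ideal.mem_map_of_mem τ hpP
  · rw [Ne, Ideal.map_eq_bot_iff_of_injective τ.injective]
    rintro rfl
    exact hp (by exact_mod_cast (Ideal.mem_bot.mp hpP))

section Norm

variable {F : Type*} [Field F] [NumberField F] [IsGalois ℚ F]

theorem NumberField.intCast_intNorm_sub_pow_mem {P : Ideal (𝓞 F)}
    (hfix : ∀ σ : 𝓞 F ≃ₐ[ℤ] 𝓞 F, P.map σ = P) {x : 𝓞 F} {c : ℤ} (hc : x - c ∈ P) :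
    ((Algebra.intNorm ℤ (𝓞 F) x - c ^ Module.finrank ℚ F : ℤ) : 𝓞 F) ∈ P := by
  have hconj (σ : 𝓞 F ≃ₐ[ℤ] 𝓞 F) : Ideal.Quotient.mk P (σ x) = Ideal.Quotient.mk P c := by
    refine Ideal.Quotient.eq.mpr ?_
    simpa [hfix σ] using Ideal.mem_map_of_mem σ hc
  have hnorm : (Algebra.intNorm ℤ (𝓞 F) x : 𝓞 F) =
      ∏ σ : Gal(F/ℚ), galRestrict ℤ ℚ F (𝓞 F) σ x := by
    rw [prod_galRestrict_eq_norm ℤ ℚ F (𝓞 F), eq_intCast]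
    congr 1
    apply IsFractionRing.injective ℤ ℚ
    rw [IsIntegralClosure.algebraMap_mk']
    exact Algebra.algebraMap_intNorm (K := ℚ) (L := F) x
  rw [← Ideal.Quotient.eq_zero_iff_mem, Int.cast_sub, map_sub, sub_eq_zero, hnorm, map_prod]
  simp only [hconj, Finset.prod_const, Finset.card_univ, ← Nat.card_eq_fintype_card,
    IsGalois.card_aut_eq_finrank, Int.cast_pow, map_pow]

theorem NumberField.Units.dvd_pow_two_mul_finrank_sub_one {p : ℕ} (hp : p.Prime)
    {P : Ideal (𝓞 F)} [P.IsPrime] (hpP : (p : 𝓞 F) ∈ P)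
    (hfix : ∀ σ : 𝓞 F ≃ₐ[ℤ] 𝓞 F, P.map σ = P) (u : (𝓞 F)ˣ) {c : ℤ} (hc : (u : 𝓞 F) - c ∈ P) :
    (p : ℤ) ∣ c ^ (2 * Module.finrank ℚ F) - 1 := by
  set n := Algebra.intNorm ℤ (𝓞 F) u
  have hn : n ^ 2 = 1 := Int.isUnit_sq (u.isUnit.map _)
  have hdvd : (p : ℤ) ∣ n - c ^ Module.finrank ℚ F :=
    (Ideal.intCast_mem_iff_dvd Ideal.IsPrime.ne_top' hp hpP _).mp
      (intCast_intNorm_sub_pow_mem hfix hc)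
  calc (p : ℤ) ∣ (n - c ^ Module.finrank ℚ F) * (-(c ^ Module.finrank ℚ F + n)) :=
        hdvd.mul_right _
    _ = c ^ (2 * Module.finrank ℚ F) - 1 := by rw [← hn]; ring

end Norm

theorem unit_eq_stmt16_general (ℓ : ℕ)
    (F : Type*) [Field F] [NumberField F] [IsGalois ℚ F]
    (hdeg : Module.finrank ℚ F = ℓ)
    (p : ℕ) (hp : p.Prime)
    (P : Ideal (𝓞 F)) (hP : P.IsPrime) (hpP : (p : 𝓞 F) ∈ P)
    (huniq : ∀ Q : Ideal (𝓞 F), Q.IsPrime → (p : 𝓞 F) ∈ Q → Q ≠ ⊥ → Q = P)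
    (lam mu : (𝓞 F)ˣ) (hsum : (lam : 𝓞 F) + (mu : 𝓞 F) = 1) (b : ℤ) (hb : (lam : 𝓞 F) - (b : 𝓞 F) ∈ P) :
    (p : ℤ) ∣ b ^ (2 * ℓ) - 1 ∧ (p : ℤ) ∣ (b - 1) ^ (2 * ℓ) - 1 := by
  have hfix (σ : 𝓞 F ≃ₐ[ℤ] 𝓞 F) : P.map σ = P :=
    Ideal.map_ringEquiv_eq_of_unique hp.ne_zero hpP huniq σ.toRingEquiv
  have hmu : (mu : 𝓞 F) - ((1 - b : ℤ) : 𝓞 F) ∈ P := by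
    convert neg_mem hb using 1
    push_cast
    linear_combination hsum
  subst hdeg
  refine ⟨Units.dvd_pow_two_mul_finrank_sub_one hp hpP hfix lam hb, ?_⟩
  rw [← neg_sub (1 : ℤ) b, Even.neg_pow ⟨_, two_mul _⟩]
  exact Units.dvd_pow_two_mul_finrank_sub_one hp hpP hfix mu hmu

theorem unit_eq_stmt16 (ℓ : ℕ) (hℓ : ℓ.Prime)
    (F : Type*) [Field F] [NumberField F] [IsGalois ℚ F]
    (hcyc : IsCyclic (F ≃ₐ[ℚ] F)) (hdeg : Module.finrank ℚ F = ℓ)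
    (p : ℕ) (hp : p.Prime)
    (P : Ideal (𝓞 F)) (hP : P.IsPrime) (hpP : (p : 𝓞 F) ∈ P)
    (htot : Ideal.ramificationIdx' (Ideal.span {(p : ℤ)}) P = ℓ)
    (huniq : ∀ Q : Ideal (𝓞 F), Q.IsPrime → (p : 𝓞 F) ∈ Q → Q ≠ ⊥ → Q = P)
    (lam mu : (𝓞 F)ˣ) (hsum : (lam : 𝓞 F) + (mu : 𝓞 F) = 1) (b : ℤ) (hb : (lam : 𝓞 F) - (b : 𝓞 F) ∈ P) :
    (p : ℤ) ∣ b ^ (2 * ℓ) - 1 ∧ (p : ℤ) ∣ (b - 1) ^ (2 * ℓ) - 1 :=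
  unit_eq_stmt16_general ℓ F hdeg p hp P hP hpP huniq lam mu hsum b hb
end

section
/- For every integer k ≥ −1, the discriminant of the polynomial g_k(X) = X^3 + kX^2 − (k+3)X + 1 equals (k^2 + 3k + 9)^2; in particular it is a nonzero perfect square, so if g_k is irreducible over ℚ then ℚ(λ) is a cyclic cubic field for any root λ. -/
open Polynomial NumberField IntermediateField

/-! The discriminant is a polynomial identity in `k`, and `k ^ 2 + 3k + 9 = ((2k + 3) ^ 2 + 27) / 4`
never vanishes. The Möbius map `x ↦ 1 / (1 - x)` has order 3 and permutes the roots of `g_k`, so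
with one root `λ` the other two are `1 / (1 - λ)` and `1 - 1 / λ`, both in `ℚ(λ)`. Hence `ℚ(λ)` is
the splitting field of `g_k`, so Galois, and its Galois group has prime order 3. -/

theorem Cubic.discr_simplest_eq_sq {R : Type*} [CommRing R] (k : R) :
    (Cubic.mk 1 k (-(k + 3)) 1).discr = (k ^ 2 + 3 * k + 9) ^ 2 := by
  simp only [Cubic.discr]; ring

theorem sq_add_three_mul_add_nine_pos {R : Type*} [CommRing R] [LinearOrder R] [IsStrictOrderedRing R]
    (k : R) : 0 < k ^ 2 + 3 * k + 9 := by
  nlinarith [sq_nonneg (2 * k + 3)]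

noncomputable def simplestCubic {R : Type*} [CommRing R] (k : R) : R[X] :=
  X ^ 3 + C k * X ^ 2 - C (k + 3) * X + 1

section simplestCubic

variable {R : Type*} [CommRing R]

theorem simplestCubic_monic (k : R) : (simplestCubic k).Monic := by
  unfold simplestCubic; monicity!

theorem natDegree_simplestCubic [Nontrivial R] (k : R) : (simplestCubic k).natDegree = 3 := by
  unfold simplestCubic; compute_degree!

theorem eval_simplestCubic (k x : R) :
    (simplestCubic k).eval x = x ^ 3 + k * x ^ 2 - (k + 3) * x + 1 := by
  simp [simplestCubic]

theorem map_simplestCubic {S : Type*} [CommRing S] (f : R →+* S) (k : R) :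
    (simplestCubic k).map f = simplestCubic (f k) := by
  simp [simplestCubic, map_ofNat]

theorem simplestCubic_eq_prod {K : Type*} [Field K] {k x : K} (hx : (simplestCubic k).eval x = 0) :
    simplestCubic k = (X - C x) * (X - C (1 - x)⁻¹) * (X - C (1 - x⁻¹)) := by
  rw [eval_simplestCubic] at hx
  have hx0 : x ≠ 0 := by rintro rfl; simp at hx
  have hx1 : 1 - x ≠ 0 := by
    intro h
    obtain rfl : x = 1 := (sub_eq_zero.mp h).symm
    exact one_ne_zero (by linear_combination -hx : (1 : K) = 0)
  have e1 : x + (1 - x)⁻¹ + (1 - x⁻¹) = -k := by field_simp; linear_combination -hx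
  have e2 : x * (1 - x)⁻¹ + x * (1 - x⁻¹) + (1 - x)⁻¹ * (1 - x⁻¹) = -(k + 3) := by
    field_simp; linear_combination -hx
  have e3 : x * (1 - x)⁻¹ * (1 - x⁻¹) = -1 := by field_simp; ring
  set y := (1 - x)⁻¹
  set z := 1 - x⁻¹
  calc simplestCubic k
      = X ^ 3 - C (x + y + z) * X ^ 2 + C (x * y + x * z + y * z) * X - C (x * y * z) := by
        rw [e1, e2, e3]; simp only [simplestCubic, map_neg, map_one]; ring
    _ = (X - C x) * (X - C y) * (X - C z) := by simp only [map_add, map_mul]; ring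

end simplestCubic

theorem IntermediateField.normal_adjoin_simple_of_rootSet_subset {F K : Type*} [Field F]
    [Field K] [Algebra F K] {p : F[X]} {α : K} (hp : p ≠ 0) (hα : aeval α p = 0)
    (hsplit : (p.map (algebraMap F K)).Splits) (hroots : p.rootSet K ⊆ F⟮α⟯) :
    Normal F F⟮α⟯ := by
  have hadj : adjoin F (p.rootSet K) = F⟮α⟯ :=
    le_antisymm (adjoin_le_iff.mpr hroots)
      (adjoin_simple_le_iff.mpr (subset_adjoin F _ (mem_rootSet.mpr ⟨hp, hα⟩)))
  have := adjoin_rootSet_isSplittingField hsplit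
  rw [hadj] at this
  exact Normal.of_isSplittingField p

theorem IsGalois.isCyclic_of_finrank_eq_prime {F E : Type*} [Field F] [Field E] [Algebra F E]
    [IsGalois F E] {p : ℕ} [Fact p.Prime] (h : Module.finrank F E = p) : IsCyclic Gal(E/F) := by
  have : FiniteDimensional F E := Module.finite_of_finrank_pos (h ▸ Nat.Prime.pos Fact.out)
  exact isCyclic_of_prime_card (IsGalois.card_aut_eq_finrank F E ▸ h)

section adjoin

variable {F K : Type*} [Field F] [Field K] [Algebra F K] {k : F} {x : K}

theorem map_simplestCubic_eq_prod (hx : aeval x (simplestCubic k) = 0) :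
    (simplestCubic k).map (algebraMap F K) =
      (X - C x) * (X - C (1 - x)⁻¹) * (X - C (1 - x⁻¹)) := by
  rw [map_simplestCubic]
  exact simplestCubic_eq_prod (by rwa [← map_simplestCubic, eval_map_algebraMap])

theorem splits_map_simplestCubic (hx : aeval x (simplestCubic k) = 0) :
    ((simplestCubic k).map (algebraMap F K)).Splits := by
  rw [map_simplestCubic_eq_prod hx]
  exact ((Splits.X_sub_C _).mul (Splits.X_sub_C _)).mul (Splits.X_sub_C _)

theorem rootSet_simplestCubic_subset_adjoin (hx : aeval x (simplestCubic k) = 0) :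
    (simplestCubic k).rootSet K ⊆ F⟮x⟯ := by
  intro y hy
  have hy : ((X - C x) * (X - C (1 - x)⁻¹) * (X - C (1 - x⁻¹))).eval y = 0 := by
    rw [← map_simplestCubic_eq_prod hx, eval_map_algebraMap]
    exact (mem_rootSet.mp hy).2
  have hxmem : x ∈ F⟮x⟯ := mem_adjoin_simple_self F x
  simp only [eval_mul, eval_sub, eval_X, eval_C, mul_eq_zero, sub_eq_zero] at hy
  obtain (rfl | rfl) | rfl := hy
  · exact hxmem
  · exact inv_mem (sub_mem (one_mem _) hxmem)
  · exact sub_mem (one_mem _) (inv_mem hxmem)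

end adjoin

theorem unit_eq_stmt18_general (k : ℤ) :
    (Cubic.mk 1 k (-(k + 3)) 1).discr = (k ^ 2 + 3 * k + 9) ^ 2 ∧
    (k ^ 2 + 3 * k + 9) ^ 2 ≠ 0 ∧
    (∃ s : ℤ, (Cubic.mk 1 k (-(k + 3)) 1).discr = s ^ 2) ∧
    (Irreducible (X ^ 3 + C (k : ℚ) * X ^ 2 - C ((k : ℚ) + 3) * X + 1 : Polynomial ℚ) →
      ∀ (K : Type) [Field K] [NumberField K] (lam : K),
        lam ^ 3 + (k : K) * lam ^ 2 - ((k : K) + 3) * lam + 1 = 0 →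
          Module.finrank ℚ (ℚ⟮lam⟯ : IntermediateField ℚ K) = 3 ∧
          IsGalois ℚ (ℚ⟮lam⟯ : IntermediateField ℚ K) ∧
          IsCyclic ((ℚ⟮lam⟯ : IntermediateField ℚ K) ≃ₐ[ℚ] (ℚ⟮lam⟯ : IntermediateField ℚ K))) := by
  refine ⟨Cubic.discr_simplest_eq_sq k, pow_ne_zero 2 (sq_add_three_mul_add_nine_pos k).ne',
    ⟨_, Cubic.discr_simplest_eq_sq k⟩, fun hirr K _ _ lam hlam => ?_⟩
  have hroot : aeval lam (simplestCubic (k : ℚ)) = 0 := by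
    rw [← eval_map_algebraMap, map_simplestCubic, eval_simplestCubic]
    simpa using hlam
  have hmin : minpoly ℚ lam = simplestCubic (k : ℚ) :=
    (minpoly.eq_of_irreducible_of_monic hirr hroot (simplestCubic_monic _)).symm
  have hfin : Module.finrank ℚ ℚ⟮lam⟯ = 3 := by
    rw [adjoin.finrank (IsIntegral.of_finite ℚ lam), hmin, natDegree_simplestCubic]
  have : Normal ℚ ℚ⟮lam⟯ := normal_adjoin_simple_of_rootSet_subset
    (simplestCubic_monic _).ne_zero hroot (splits_map_simplestCubic hroot)
    (rootSet_simplestCubic_subset_adjoin hroot)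
  have : IsGalois ℚ ℚ⟮lam⟯ := ⟨⟩
  have : Fact (Nat.Prime 3) := ⟨Nat.prime_three⟩
  exact ⟨hfin, inferInstance, IsGalois.isCyclic_of_finrank_eq_prime hfin⟩

theorem unit_eq_stmt18 (k : ℤ) (hk : -1 ≤ k) :
    (Cubic.mk 1 k (-(k + 3)) 1).discr = (k ^ 2 + 3 * k + 9) ^ 2 ∧
    (k ^ 2 + 3 * k + 9) ^ 2 ≠ 0 ∧
    (∃ s : ℤ, (Cubic.mk 1 k (-(k + 3)) 1).discr = s ^ 2) ∧
    (Irreducible (X ^ 3 + C (k : ℚ) * X ^ 2 - C ((k : ℚ) + 3) * X + 1 : Polynomial ℚ) →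
      ∀ (K : Type) [Field K] [NumberField K] (lam : K),
        lam ^ 3 + (k : K) * lam ^ 2 - ((k : K) + 3) * lam + 1 = 0 →
          Module.finrank ℚ (ℚ⟮lam⟯ : IntermediateField ℚ K) = 3 ∧
          IsGalois ℚ (ℚ⟮lam⟯ : IntermediateField ℚ K) ∧
          IsCyclic ((ℚ⟮lam⟯ : IntermediateField ℚ K) ≃ₐ[ℚ] (ℚ⟮lam⟯ : IntermediateField ℚ K))) :=
  unit_eq_stmt18_general k
end
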